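/- The Cheeger constant of a finite weighted graph equals the minimum over all semi-metrics d on the vertex set that are nonnegative linear combinations of elementary cut semi-metrics, normalized so that Σ_u Σ_v d(u,v) = 1, of Σ_{edges uv} m(uv) d(u,v). -/

import Mathlib

open Finset Classical

variable {V : Type*} [Fintype V] [DecidableEq V]

/-- The elementary cut semi-metric attached to a cut `S`. -/
def cutDist (S : Finset V) (u v : V) : ℝ :=
  |(if u ∈ S then (1:ℝ) else 0) - (if v ∈ S then (1:ℝ) else 0)|

/-!
Write `E S` and `T S` for the numerator and the denominator of the Cheeger ratio of the cut `S`.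
Both are linear in the semi-metric, so on `d = ∑ S, c S • d_S` the objective and the normalization
become `∑ S, c S * E S` and `∑ S, c S * T S`. If `μ` is the least ratio `E S / T S` over proper
cuts then `μ * T S ≤ E S` for every `S` (trivial cuts have `E S = T S = 0`), so every normalized
combination has value at least `μ`, while each proper cut, rescaled by `(T S)⁻¹`, is itself such
a combination of value `E S / T S`.
-/

section Cone

variable {ι : Type*} [Fintype ι]

theorem sInf_ratio_mul_le (p : ι → Prop) (E T : ι → ℝ)
    (hpos : ∀ i, p i → 0 < T i) (htriv : ∀ i, ¬ p i → T i = 0 ∧ E i = 0) (i : ι) :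
    sInf {r : ℝ | ∃ j, p j ∧ r = E j / T j} * T i ≤ E i := by
  by_cases hi : p i
  · have hfin : {r : ℝ | ∃ j, p j ∧ r = E j / T j}.Finite :=
      (Set.finite_range fun j => E j / T j).subset (by rintro _ ⟨j, -, rfl⟩; exact ⟨j, rfl⟩)
    rw [← le_div_iff₀ (hpos i hi)]
    exact csInf_le hfin.bddBelow ⟨i, hi, rfl⟩
  · obtain ⟨hT, hE⟩ := htriv i hi
    rw [hT, hE, mul_zero]

theorem sInf_ratio_eq_sInf_normalized_cone (p : ι → Prop) (E T : ι → ℝ)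
    (hpos : ∀ i, p i → 0 < T i) (htriv : ∀ i, ¬ p i → T i = 0 ∧ E i = 0) :
    sInf {r : ℝ | ∃ i, p i ∧ r = E i / T i}
      = sInf {r : ℝ | ∃ c : ι → ℝ, (∀ i, 0 ≤ c i) ∧ ∑ i, c i * T i = 1 ∧
          r = ∑ i, c i * E i} := by
  set A := {r : ℝ | ∃ i, p i ∧ r = E i / T i}
  set B := {r : ℝ | ∃ c : ι → ℝ, (∀ i, 0 ≤ c i) ∧ ∑ i, c i * T i = 1 ∧ r = ∑ i, c i * E i}
  have hAB : A ⊆ B := by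
    rintro _ ⟨i, hi, rfl⟩
    refine ⟨fun j => if j = i then (T i)⁻¹ else 0, fun j => ?_, ?_, ?_⟩
    · dsimp only
      split_ifs
      exacts [inv_nonneg.mpr (hpos i hi).le, le_rfl]
    · simp [(hpos i hi).ne']
    · simp [div_eq_inv_mul]
  have hB_lower : ∀ r ∈ B, sInf A ≤ r := by
    rintro _ ⟨c, hc, hcT, rfl⟩
    calc sInf A = sInf A * ∑ i, c i * T i := by rw [hcT, mul_one]
      _ = ∑ i, c i * (sInf A * T i) := by
          rw [Finset.mul_sum]; exact Finset.sum_congr rfl fun i _ => by ring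
      _ ≤ ∑ i, c i * E i := Finset.sum_le_sum fun i _ =>
          mul_le_mul_of_nonneg_left (sInf_ratio_mul_le p E T hpos htriv i) (hc i)
  rcases A.eq_empty_or_nonempty with hA | hA
  -- no index with `p`: both sides are the junk value `sInf ∅ = 0`
  · have hB : B = ∅ := by
      refine Set.eq_empty_of_forall_notMem ?_
      rintro _ ⟨c, -, hcT, -⟩
      have hT : ∀ i, T i = 0 := fun i =>
        (htriv i fun hi => (Set.eq_empty_iff_forall_notMem.mp hA) _ ⟨i, hi, rfl⟩).1
      simp [hT] at hcT
    rw [hA, hB]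
  · exact le_antisymm (le_csInf (hA.mono hAB) hB_lower) (csInf_le_csInf ⟨_, hB_lower⟩ hA hAB)

end Cone

theorem sum_sum_mul_sum_comm {α β ι : Type*} [Fintype α] [Fintype β] [Fintype ι]
    (g : α → β → ℝ) (c : ι → ℝ) (f : ι → α → β → ℝ) :
    ∑ u, ∑ v, g u v * ∑ i, c i * f i u v = ∑ i, c i * ∑ u, ∑ v, g u v * f i u v := by
  simp only [Finset.mul_sum, mul_left_comm (g _ _)]
  rw [Finset.sum_comm_cycle]

theorem cutDist_eq_zero_of_trivial {S : Finset V} (hS : ¬ (S.Nonempty ∧ S ≠ univ)) (u v : V) :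
    cutDist S u v = 0 := by
  rcases not_and_or.mp hS with hS | hS
  · simp [cutDist, not_nonempty_iff_eq_empty.mp hS]
  · simp [cutDist, not_not.mp hS]

theorem sum_sum_cutDist_pos {S : Finset V} (hne : S.Nonempty) (huniv : S ≠ univ) :
    0 < ∑ u, ∑ v, cutDist S u v := by
  obtain ⟨a, ha⟩ := hne
  obtain ⟨b, hb⟩ : ∃ b, b ∉ S := by simpa [eq_univ_iff_forall] using huniv
  have hab : cutDist S a b = 1 := by simp [cutDist, ha, hb]
  have hnonneg : ∀ u v, 0 ≤ cutDist S u v := fun _ _ => abs_nonneg _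
  refine Finset.sum_pos' (fun u _ => Finset.sum_nonneg fun v _ => hnonneg u v) ⟨a, mem_univ a, ?_⟩
  exact Finset.sum_pos' (fun v _ => hnonneg a v) ⟨b, mem_univ b, by rw [hab]; exact one_pos⟩

theorem cutCone_objective_values_eq (w : V → V → ℝ) :
    {r : ℝ | ∃ d : V → V → ℝ,
        (∃ c : Finset V → ℝ, (∀ S, 0 ≤ c S) ∧ ∀ u v, d u v = ∑ S, c S * cutDist S u v) ∧
        ∑ u, ∑ v, d u v = 1 ∧ r = ∑ u, ∑ v, w u v * d u v}
      = {r : ℝ | ∃ c : Finset V → ℝ, (∀ S, 0 ≤ c S) ∧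
          ∑ S, c S * ∑ u, ∑ v, cutDist S u v = 1 ∧
          r = ∑ S, c S * ∑ u, ∑ v, w u v * cutDist S u v} := by
  have hnorm : ∀ c : Finset V → ℝ, ∑ u, ∑ v, ∑ S, c S * cutDist S u v
      = ∑ S, c S * ∑ u, ∑ v, cutDist S u v := by
    intro c
    simpa only [one_mul] using sum_sum_mul_sum_comm (fun _ _ => (1 : ℝ)) c cutDist
  ext r
  constructor
  · rintro ⟨d, ⟨c, hc, hd⟩, hd1, rfl⟩
    obtain rfl : d = fun u v => ∑ S, c S * cutDist S u v := funext₂ hd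
    exact ⟨c, hc, (hnorm c).symm.trans hd1, sum_sum_mul_sum_comm w c cutDist⟩
  · rintro ⟨c, hc, hc1, rfl⟩
    exact ⟨fun u v => ∑ S, c S * cutDist S u v, ⟨c, hc, fun _ _ => rfl⟩,
      (hnorm c).trans hc1, (sum_sum_mul_sum_comm w c cutDist).symm⟩

theorem cheeger_eq_min_over_cut_cone_general (G : SimpleGraph V) (m : V → V → ℝ) :
    sInf {r : ℝ | ∃ S : Finset V, S.Nonempty ∧ S ≠ Finset.univ ∧
        r = (∑ u : V, ∑ v : V, (if G.Adj u v then m u v else 0) * cutDist S u v) /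
            (∑ u : V, ∑ v : V, cutDist S u v)}
    = sInf {r : ℝ | ∃ d : V → V → ℝ,
        (∃ c : Finset V → ℝ, (∀ S, 0 ≤ c S) ∧
            ∀ u v, d u v = ∑ S : Finset V, c S * cutDist S u v) ∧
        (∑ u : V, ∑ v : V, d u v) = 1 ∧
        r = ∑ u : V, ∑ v : V, (if G.Adj u v then m u v else 0) * d u v} := by
  rw [cutCone_objective_values_eq]
  have hcone := sInf_ratio_eq_sInf_normalized_cone (fun S : Finset V => S.Nonempty ∧ S ≠ univ)
    (fun S => ∑ u, ∑ v, (if G.Adj u v then m u v else 0) * cutDist S u v)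
    (fun S => ∑ u, ∑ v, cutDist S u v)
    (fun S hS => sum_sum_cutDist_pos hS.1 hS.2)
    (fun S hS => by simp [cutDist_eq_zero_of_trivial hS])
  simpa only [and_assoc] using hcone

/-- The Cheeger constant of a finite weighted graph equals the minimum, over semi-metrics
`d` lying in the cut cone (nonnegative combinations of elementary cut semi-metrics)
normalized by `Σ_u Σ_v d(u,v) = 1`, of `Σ_{edges uv} m(uv) d(u,v)`. -/
theorem cheeger_eq_min_over_cut_cone (G : SimpleGraph V) (m : V → V → ℝ)
    (hm : ∀ u v, m u v = m v u) (hm0 : ∀ u v, 0 ≤ m u v) (hV : Nontrivial V) :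
    sInf {r : ℝ | ∃ S : Finset V, S.Nonempty ∧ S ≠ Finset.univ ∧
        r = (∑ u : V, ∑ v : V, (if G.Adj u v then m u v else 0) * cutDist S u v) /
            (∑ u : V, ∑ v : V, cutDist S u v)}
    = sInf {r : ℝ | ∃ d : V → V → ℝ,
        (∃ c : Finset V → ℝ, (∀ S, 0 ≤ c S) ∧
            ∀ u v, d u v = ∑ S : Finset V, c S * cutDist S u v) ∧
        (∑ u : V, ∑ v : V, d u v) = 1 ∧
        r = ∑ u : V, ∑ v : V, (if G.Adj u v then m u v else 0) * d u v} :=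
  cheeger_eq_min_over_cut_cone_general G m
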